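/- Let f_x, f_y > 0, (u_0, v_0) ∈ ℝ², 0 < Z_min < Z_max, b ≥ 1, and let I be a finite nonempty set of pixels with N = |I|. For depth images L_P, L_Q : I → ℝ, matching each point of the first cloud to the point of the second cloud projected at the same pixel, the mean Euclidean distance between matched points satisfies (1/N) · Σ_{(u,v)∈I} ‖m(u,v,L_P(u,v)) − m(u,v,L_Q(u,v))‖₂ = ((Z_max − Z_min)/(N·(2^b − 1))) · Σ_{(u,v)∈I} R_{uv} · |L_P(u,v) − L_Q(u,v)|, where R_{uv} = √(1 + ((u−u_0)/f_x)² + ((v−v_0)/f_y)²). -/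

import Mathlib

/-- Affine depth model: luminance `L` ↦ depth `Z(L)`. -/
noncomputable def depthZ (Zmin Zmax : ℝ) (b : ℕ) (L : ℝ) : ℝ :=
  (Zmin - Zmax) / (2 ^ b - 1) * L + Zmax

/-- Pixel weight `R_{uv} = √(1 + x² + y²)` with normalized coordinates. -/
noncomputable def weightR (fx fy u0 v0 u v : ℝ) : ℝ :=
  Real.sqrt (1 + ((u - u0) / fx) ^ 2 + ((v - v0) / fy) ^ 2)

/-- The mapping `m` sending `(u, v, L)` to the corresponding 3D point in `ℝ³`
with the Euclidean norm. -/
noncomputable def camMapE (fx fy u0 v0 Zmin Zmax : ℝ) (b : ℕ) (u v L : ℝ) :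
    EuclideanSpace ℝ (Fin 3) :=
  WithLp.toLp 2 ![((u - u0) / fx) * depthZ Zmin Zmax b L,
    ((v - v0) / fy) * depthZ Zmin Zmax b L,
    depthZ Zmin Zmax b L]

/-!
The point `m(u, v, L)` is the viewing ray `(x, y, 1)` of the pixel scaled by the depth `Z(L)`,
so the two matched points differ by `(Z(L_P) - Z(L_Q)) • (x, y, 1)`. Its length is
`|Z(L_P) - Z(L_Q)| · R_{uv}`, and `Z` is affine with slope of absolute value
`(Z_max - Z_min) / (2^b - 1)`; averaging over the pixels gives the identity.
-/

noncomputable def pixelRay (fx fy u0 v0 u v : ℝ) : EuclideanSpace ℝ (Fin 3) :=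
  !₂[(u - u0) / fx, (v - v0) / fy, 1]

section

variable (fx fy u0 v0 Zmin Zmax : ℝ) (b : ℕ) (u v : ℝ)

theorem norm_pixelRay : ‖pixelRay fx fy u0 v0 u v‖ = weightR fx fy u0 v0 u v := by
  rw [EuclideanSpace.norm_eq, Fin.sum_univ_three, weightR]
  simp only [pixelRay, PiLp.toLp_apply, Matrix.cons_val, Real.norm_eq_abs, sq_abs, one_pow]
  congr 1
  ring

theorem camMapE_eq_smul_pixelRay (L : ℝ) :
    camMapE fx fy u0 v0 Zmin Zmax b u v L = depthZ Zmin Zmax b L • pixelRay fx fy u0 v0 u v := by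
  ext i
  fin_cases i <;> simp [camMapE, pixelRay, mul_comm]

theorem abs_depthZ_sub_depthZ (hZ : Zmin ≤ Zmax) (L L' : ℝ) :
    |depthZ Zmin Zmax b L - depthZ Zmin Zmax b L'| = (Zmax - Zmin) / (2 ^ b - 1) * |L - L'| := by
  have hpow : (0 : ℝ) ≤ 2 ^ b - 1 := sub_nonneg.mpr (one_le_pow₀ one_le_two)
  have hslope : depthZ Zmin Zmax b L - depthZ Zmin Zmax b L' =
      -((Zmax - Zmin) / (2 ^ b - 1)) * (L - L') := by
    simp only [depthZ]
    ring
  rw [hslope, abs_mul, abs_neg, abs_of_nonneg (div_nonneg (sub_nonneg.mpr hZ) hpow)]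

theorem norm_camMapE_sub_camMapE (hZ : Zmin ≤ Zmax) (L L' : ℝ) :
    ‖camMapE fx fy u0 v0 Zmin Zmax b u v L - camMapE fx fy u0 v0 Zmin Zmax b u v L'‖ =
      (Zmax - Zmin) / (2 ^ b - 1) * (weightR fx fy u0 v0 u v * |L - L'|) := by
  rw [camMapE_eq_smul_pixelRay, camMapE_eq_smul_pixelRay, ← sub_smul, norm_smul,
    Real.norm_eq_abs, abs_depthZ_sub_depthZ Zmin Zmax b hZ, norm_pixelRay]
  ring

end

theorem mean_dist_eq_weighted_image_diff_general
    (fx fy u0 v0 Zmin Zmax : ℝ)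
    (hZ : Zmin < Zmax) (b : ℕ)
    (I : Finset (ℝ × ℝ))
    (LP LQ : ℝ × ℝ → ℝ) :
    (1 / (I.card : ℝ)) *
        ∑ p ∈ I, ‖camMapE fx fy u0 v0 Zmin Zmax b p.1 p.2 (LP p) -
            camMapE fx fy u0 v0 Zmin Zmax b p.1 p.2 (LQ p)‖ =
      (Zmax - Zmin) / ((I.card : ℝ) * (2 ^ b - 1)) *
        ∑ p ∈ I, weightR fx fy u0 v0 p.1 p.2 * |LP p - LQ p| := by
  simp_rw [norm_camMapE_sub_camMapE (hZ := hZ.le), ← Finset.mul_sum,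
    div_mul_eq_div_div_swap]
  ring

/-- The mean Euclidean distance between pixelwise-matched points of the two clouds
equals the weighted mean pixelwise luminance difference. -/
theorem mean_dist_eq_weighted_image_diff
    (fx fy u0 v0 Zmin Zmax : ℝ) (hfx : 0 < fx) (hfy : 0 < fy)
    (hZmin : 0 < Zmin) (hZ : Zmin < Zmax) (b : ℕ) (hb : 1 ≤ b)
    (I : Finset (ℝ × ℝ)) (hI : I.Nonempty)
    (LP LQ : ℝ × ℝ → ℝ) :
    (1 / (I.card : ℝ)) *
        ∑ p ∈ I, ‖camMapE fx fy u0 v0 Zmin Zmax b p.1 p.2 (LP p) -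
            camMapE fx fy u0 v0 Zmin Zmax b p.1 p.2 (LQ p)‖ =
      (Zmax - Zmin) / ((I.card : ℝ) * (2 ^ b - 1)) *
        ∑ p ∈ I, weightR fx fy u0 v0 p.1 p.2 * |LP p - LQ p| :=
  mean_dist_eq_weighted_image_diff_general fx fy u0 v0 Zmin Zmax hZ b I LP LQ
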